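/- Let G be a finite 2-group with center C such that G/C = ⟨aC⟩ × ⟨bC⟩ is a direct product of two groups of order two and the commutator subgroup G' = ⟨e⟩ has order two. Then every element of the form y = 1 + y₁a + y₂b + y₃ab with y₁, y₂, y₃ ∈ (1 + e)ℤ₂C is a central unit of ℤ₂G satisfying y² = 1; consequently W = {1 + y₁a + y₂b + y₃ab : yᵢ ∈ (1 + e)ℤ₂C} is a central elementary abelian 2-subgroup of V_⊙(ℤ₂G). -/

import Mathlib

/-- The group algebra of `G` over the field `ℤ₂` with two elements. -/
abbrev R2 (G : Type*) [Group G] := MonoidAlgebra (ZMod 2) G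

/-- The image of a group element in the group algebra. -/
noncomputable def emb {G : Type*} [Group G] (g : G) : R2 G := MonoidAlgebra.single g 1

/-- The augmentation map: the sum of the coefficients. -/
def aug {G : Type*} [Group G] (x : R2 G) : ZMod 2 := Finsupp.sum x.coeff fun _ c => c

/-- The canonical embedding of `G` into the unit group of its group algebra. -/
noncomputable def iota (G : Type*) [Group G] : G →* (R2 G)ˣ :=
  (Units.map (MonoidAlgebra.of (ZMod 2) G)).comp toUnits.toMonoidHom

open Classical in
/-- The map `g ↦ g` for `g ∈ C = Z(G)` and `g ↦ ge` for `g ∉ C`. -/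
noncomputable def sigmaMap (G : Type*) [Group G] (e : G) : G → G :=
  fun g => if g ∈ Subgroup.center G then g else g * e

/-- The involution `⊙` of `ℤ₂G`: the linear extension of `g ↦ g` for `g ∈ C = Z(G)`
and `g ↦ ge` for `g ∉ C`. -/
noncomputable def odot {G : Type*} [Group G] (e : G) (x : R2 G) : R2 G :=
  MonoidAlgebra.ofCoeff (Finsupp.mapDomain (sigmaMap G e) x.coeff)

/-- The set of unitary normalized units: `V_⊙(ℤ₂G) = {u ∈ V(ℤ₂G) : u⊙ = u⁻¹}`. -/
noncomputable def VodotSet (G : Type*) [Group G] (e : G) : Set (R2 G)ˣ :=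
  {u | aug (u : R2 G) = 1 ∧ odot e (u : R2 G) = ((u⁻¹ : (R2 G)ˣ) : R2 G)}

/-- Membership in the ideal `(1 + e)ℤ₂C` of `ℤ₂C`, where `C = Z(G)`. -/
noncomputable def InIdC {G : Type*} [Group G] (e : G) (x : R2 G) : Prop :=
  ∃ u : R2 G, ↑u.coeff.support ⊆ (Subgroup.center G : Set G) ∧ x = (1 + emb e) * u

/-- The set `W = {1 + y₁a + y₂b + y₃ab : yᵢ ∈ (1 + e)ℤ₂C}` inside the unit group. -/
noncomputable def WsetB {G : Type*} [Group G] (e a b : G) : Set (R2 G)ˣ :=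
  {w | ∃ y₁ y₂ y₃ : R2 G, InIdC e y₁ ∧ InIdC e y₂ ∧ InIdC e y₃ ∧
    (w : R2 G) = 1 + y₁ * emb a + y₂ * emb b + y₃ * (emb a * emb b)}

/-- The set `V(ℤ₂C)[2]` of normalized units of `ℤ₂C` of order dividing 2, where `C = Z(G)`. -/
noncomputable def V2Set (G : Type*) [Group G] : Set (R2 G)ˣ :=
  {u | ↑(u : R2 G).coeff.support ⊆ (Subgroup.center G : Set G) ∧ aug (u : R2 G) = 1 ∧ u * u = 1}

/-!
Write `yᵢ = (1 + e)uᵢ`, so that `y = 1 + (1 + e)x` with `x = u₁a + u₂b + u₃ab`. Every commutator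
of `G` lies in `⟨e⟩ = {1, e}` and `(1 + e)e = 1 + e`, so each `(1 + e)g` commutes with every
`h ∈ G`: the ideal `(1 + e)ℤ₂G` is central. Since `(1 + e)² = 0` it has square zero, hence
`(1 + (1 + e)x)(1 + (1 + e)x') = 1 + (1 + e)(x + x')`, and in characteristic 2 every such element
is an involution. Finally `g⊙ ∈ {g, ge}` and `(1 + e)ge = (1 + e)g`, so `⊙` fixes `(1 + e)ℤ₂G`,
while the augmentation of `1 + e` is `0`.
-/

open scoped commutatorElement

section

variable {G : Type*} [Group G] {e a b : G}

lemma eq_one_or_eq_of_mem_zpowers (he : orderOf e = 2) {x : G} (hx : x ∈ Subgroup.zpowers e) :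
    x = 1 ∨ x = e := by
  obtain ⟨k, rfl⟩ := Subgroup.mem_zpowers_iff.mp hx
  rw [← zpow_mod_orderOf, he]
  rcases Int.emod_two_eq_zero_or_one k with h | h <;> simp [h]

lemma mem_center_of_commutator_eq_zpowers (hcomm : commutator G = Subgroup.zpowers e)
    (he : orderOf e = 2) : e ∈ Subgroup.center G := by
  refine Subgroup.mem_center_iff.mpr fun g => ?_
  have he_mem : e ∈ commutator G := hcomm ▸ Subgroup.mem_zpowers e
  have hconj : g * e * g⁻¹ ∈ Subgroup.zpowers e :=
    hcomm ▸ Subgroup.Normal.conj_mem inferInstance e he_mem g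
  rcases eq_one_or_eq_of_mem_zpowers he hconj with h | h
  · rw [conj_eq_one_iff] at h
    simp [h] at he
  · exact mul_inv_eq_iff_eq_mul.mp h

lemma mul_eq_or_eq_mul_mul_of_commutator_eq_zpowers (hcomm : commutator G = Subgroup.zpowers e)
    (he : orderOf e = 2) (g h : G) : g * h = h * g ∨ g * h = h * g * e := by
  have hgh : ⁅g, h⁆ ∈ Subgroup.zpowers e := by
    rw [← hcomm, commutator_def]
    exact Subgroup.commutator_mem_commutator (Subgroup.mem_top g) (Subgroup.mem_top h)
  have hmul : g * h = ⁅g, h⁆ * (h * g) := by rw [commutatorElement_def]; group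
  rcases eq_one_or_eq_of_mem_zpowers he hgh with h1 | he'
  · left; rw [hmul, h1, one_mul]
  · right; rw [hmul, he', Subgroup.mem_center_iff.mp (mem_center_of_commutator_eq_zpowers hcomm he)]

lemma emb_mul (g h : G) : emb g * emb h = (emb (g * h) : R2 G) := by
  simp [emb, MonoidAlgebra.single_mul_single]

lemma emb_one : (emb 1 : R2 G) = 1 := rfl

lemma commute_emb_of_mem_center {g : G} (hg : g ∈ Subgroup.center G) (x : R2 G) :
    Commute (emb g) x :=
  MonoidAlgebra.single_commute (fun h => (Subgroup.mem_center_iff.mp hg h).symm) (Commute.all 1) x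

lemma commute_of_forall_commute_emb {z : R2 G} (hz : ∀ g : G, Commute z (emb g)) (x : R2 G) :
    Commute z x := by
  induction x using MonoidAlgebra.induction_on with
  | of g => exact hz g
  | add x y hx hy => exact hx.add_right hy
  | smul r x hx => exact hx.smul_right r

lemma aug_eq_lift (x : R2 G) : aug x = MonoidAlgebra.lift (ZMod 2) (ZMod 2) G 1 x := by
  rw [MonoidAlgebra.lift_apply]
  simp [aug]

lemma odot_add (x y : R2 G) : odot e (x + y) = odot e x + odot e y :=
  MonoidAlgebra.mapDomain_add _ x y

lemma odot_smul (r : ZMod 2) (x : R2 G) : odot e (r • x) = r • odot e x :=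
  MonoidAlgebra.mapDomain_smul _ r x

lemma odot_emb (g : G) : odot e (emb g) = emb (sigmaMap G e g) :=
  MonoidAlgebra.mapDomain_single

lemma odot_one : odot e (1 : R2 G) = 1 := by
  rw [← emb_one, odot_emb, sigmaMap, if_pos (Subgroup.one_mem _)]

lemma one_add_emb_mul_emb_mul (hec : e ∈ Subgroup.center G) (he2 : e * e = 1) (g : G) :
    (1 + emb e) * emb (g * e) = (1 + emb e : R2 G) * emb g := by
  rw [← emb_mul, ← (commute_emb_of_mem_center hec _).eq, ← mul_assoc, add_mul, one_mul, emb_mul,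
    he2, emb_one, add_comm]

lemma one_add_emb_mul_self (he2 : e * e = 1) : (1 + emb e) * (1 + emb e : R2 G) = 0 := by
  rw [mul_add, mul_one, add_mul, one_mul, emb_mul, he2, emb_one, add_comm (emb e),
    ZModModule.add_self]

lemma commute_one_add_emb_mul_emb (hcomm : commutator G = Subgroup.zpowers e)
    (he : orderOf e = 2) (g h : G) : Commute ((1 + emb e : R2 G) * emb g) (emb h) := by
  have hec := mem_center_of_commutator_eq_zpowers hcomm he
  have he2 : e * e = 1 := by rw [← pow_two, ← he, pow_orderOf_eq_one]
  have hmul : (1 + emb e : R2 G) * emb (g * h) = (1 + emb e) * emb (h * g) := by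
    rcases mul_eq_or_eq_mul_mul_of_commutator_eq_zpowers hcomm he g h with hgh | hgh
    · rw [hgh]
    · rw [hgh, one_add_emb_mul_emb_mul hec he2]
  have hh : Commute (1 + emb e : R2 G) (emb h) :=
    (Commute.one_left _).add_left (commute_emb_of_mem_center hec _)
  calc (1 + emb e : R2 G) * emb g * emb h = (1 + emb e) * emb (h * g) := by
        rw [mul_assoc, emb_mul, hmul]
    _ = emb h * ((1 + emb e) * emb g) := by rw [← emb_mul, ← mul_assoc, hh.eq, mul_assoc]

lemma commute_one_add_emb_mul (hcomm : commutator G = Subgroup.zpowers e)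
    (he : orderOf e = 2) (x z : R2 G) : Commute ((1 + emb e) * x) z := by
  induction x using MonoidAlgebra.induction_on with
  | of g => exact commute_of_forall_commute_emb (commute_one_add_emb_mul_emb hcomm he g) z
  | add x y hx hy => rw [mul_add]; exact hx.add_left hy
  | smul r x hx => rw [mul_smul_comm]; exact hx.smul_left r

lemma one_add_emb_mul_mul_one_add_emb_mul (hec : e ∈ Subgroup.center G) (he2 : e * e = 1)
    (x y : R2 G) : (1 + emb e) * x * ((1 + emb e) * y) = 0 := by
  have hx : Commute x (1 + emb e) :=
    ((Commute.one_left x).add_left (commute_emb_of_mem_center hec x)).symm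
  rw [mul_assoc, ← mul_assoc x, hx.eq, mul_assoc, ← mul_assoc, one_add_emb_mul_self he2, zero_mul]

lemma odot_one_add_emb_mul (hec : e ∈ Subgroup.center G) (he2 : e * e = 1) (x : R2 G) :
    odot e ((1 + emb e) * x) = (1 + emb e) * x := by
  induction x using MonoidAlgebra.induction_on with
  | of g =>
    change odot e ((1 + emb e) * emb g) = (1 + emb e) * emb g
    rw [add_mul, one_mul, emb_mul, odot_add, odot_emb, odot_emb]
    have heg : e * g ∈ Subgroup.center G ↔ g ∈ Subgroup.center G :=
      Subgroup.mul_mem_cancel_left _ hec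
    by_cases hg : g ∈ Subgroup.center G
    · rw [sigmaMap, sigmaMap, if_pos hg, if_pos (heg.mpr hg)]
    · have hge : g * e = e * g := Subgroup.mem_center_iff.mp hec g
      rw [sigmaMap, sigmaMap, if_neg hg, if_neg (heg.not.mpr hg), hge, mul_assoc, hge,
        ← mul_assoc, he2, one_mul, add_comm]
  | add x y hx hy => rw [mul_add, odot_add, hx, hy]
  | smul r x hx => rw [mul_smul_comm, odot_smul, hx]

lemma aug_one_add_one_add_emb_mul (x : R2 G) : aug (1 + (1 + emb e) * x) = 1 := by
  simp [aug_eq_lift, emb, ZModModule.add_self]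

lemma one_add_one_add_emb_mul_mul (hec : e ∈ Subgroup.center G) (he2 : e * e = 1) (x y : R2 G) :
    (1 + (1 + emb e) * x) * (1 + (1 + emb e) * y) = 1 + (1 + emb e) * (x + y) := by
  rw [one_add_mul ((1 + emb e) * x), mul_one_add ((1 + emb e) * x),
    one_add_emb_mul_mul_one_add_emb_mul hec he2, add_zero, mul_add]
  abel

lemma one_add_one_add_emb_mul_mul_self (hec : e ∈ Subgroup.center G) (he2 : e * e = 1)
    (x : R2 G) : (1 + (1 + emb e) * x) * (1 + (1 + emb e) * x) = 1 := by
  rw [one_add_one_add_emb_mul_mul hec he2, ZModModule.add_self, mul_zero, add_zero]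

def IsCentralUnitaryInvolution (e : G) (w : R2 G) : Prop :=
  (∀ x : R2 G, w * x = x * w) ∧ w * w = 1 ∧ aug w = 1 ∧ odot e w * w = 1

lemma isCentralUnitaryInvolution_one_add_one_add_emb_mul
    (hcomm : commutator G = Subgroup.zpowers e) (he : orderOf e = 2) (x : R2 G) :
    IsCentralUnitaryInvolution e (1 + (1 + emb e) * x) := by
  have hec := mem_center_of_commutator_eq_zpowers hcomm he
  have he2 : e * e = 1 := by rw [← pow_two, ← he, pow_orderOf_eq_one]
  refine ⟨fun z => ((Commute.one_left z).add_left (commute_one_add_emb_mul hcomm he x z)).eq,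
    one_add_one_add_emb_mul_mul_self hec he2 x, aug_one_add_one_add_emb_mul x, ?_⟩
  rw [odot_add, odot_one, odot_one_add_emb_mul hec he2, one_add_one_add_emb_mul_mul_self hec he2]

lemma one_add_mul_emb_add_mul_emb_add_mul_emb (e a b : G) (u₁ u₂ u₃ : R2 G) :
    1 + (1 + emb e) * u₁ * emb a + (1 + emb e) * u₂ * emb b + (1 + emb e) * u₃ * (emb a * emb b) =
      1 + (1 + emb e) * (u₁ * emb a + u₂ * emb b + u₃ * (emb a * emb b)) := by
  noncomm_ring

lemma InIdC.zero : InIdC e (0 : R2 G) :=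
  ⟨0, by simp, (mul_zero _).symm⟩

lemma InIdC.add {x y : R2 G} (hx : InIdC e x) (hy : InIdC e y) : InIdC e (x + y) := by
  classical
  obtain ⟨u, hu, rfl⟩ := hx
  obtain ⟨v, hv, rfl⟩ := hy
  refine ⟨u + v, fun g hg => ?_, (mul_add _ _ _).symm⟩
  rw [MonoidAlgebra.coeff_add] at hg
  exact (Finset.mem_union.mp (Finsupp.support_add hg)).elim (fun h => hu h) (fun h => hv h)

lemma isCentralUnitaryInvolution_of_inIdC (hcomm : commutator G = Subgroup.zpowers e)
    (he : orderOf e = 2) {y₁ y₂ y₃ : R2 G} (hy₁ : InIdC e y₁) (hy₂ : InIdC e y₂)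
    (hy₃ : InIdC e y₃) :
    IsCentralUnitaryInvolution e (1 + y₁ * emb a + y₂ * emb b + y₃ * (emb a * emb b)) := by
  obtain ⟨⟨u₁, -, rfl⟩, ⟨u₂, -, rfl⟩, ⟨u₃, -, rfl⟩⟩ := And.intro hy₁ (And.intro hy₂ hy₃)
  rw [one_add_mul_emb_add_mul_emb_add_mul_emb]
  exact isCentralUnitaryInvolution_one_add_one_add_emb_mul hcomm he _

lemma isCentralUnitaryInvolution_of_mem_WsetB (hcomm : commutator G = Subgroup.zpowers e)
    (he : orderOf e = 2) {w : (R2 G)ˣ} (hw : w ∈ WsetB e a b) :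
    IsCentralUnitaryInvolution e w := by
  obtain ⟨y₁, y₂, y₃, hy₁, hy₂, hy₃, hw⟩ := hw
  rw [hw]
  exact isCentralUnitaryInvolution_of_inIdC hcomm he hy₁ hy₂ hy₃

lemma one_mem_WsetB : (1 : (R2 G)ˣ) ∈ WsetB e a b :=
  ⟨0, 0, 0, .zero, .zero, .zero, by simp⟩

lemma mul_mem_WsetB (hec : e ∈ Subgroup.center G) (he2 : e * e = 1) {w w' : (R2 G)ˣ}
    (hw : w ∈ WsetB e a b) (hw' : w' ∈ WsetB e a b) : w * w' ∈ WsetB e a b := by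
  obtain ⟨y₁, y₂, y₃, hy₁, hy₂, hy₃, hw⟩ := hw
  obtain ⟨z₁, z₂, z₃, hz₁, hz₂, hz₃, hw'⟩ := hw'
  refine ⟨_, _, _, hy₁.add hz₁, hy₂.add hz₂, hy₃.add hz₃, ?_⟩
  obtain ⟨⟨u₁, -, rfl⟩, ⟨u₂, -, rfl⟩, ⟨u₃, -, rfl⟩⟩ := And.intro hy₁ (And.intro hy₂ hy₃)
  obtain ⟨⟨v₁, -, rfl⟩, ⟨v₂, -, rfl⟩, ⟨v₃, -, rfl⟩⟩ := And.intro hz₁ (And.intro hz₂ hz₃)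
  rw [Units.val_mul, hw, hw', one_add_mul_emb_add_mul_emb_add_mul_emb,
    one_add_mul_emb_add_mul_emb_add_mul_emb, one_add_one_add_emb_mul_mul hec he2]
  noncomm_ring

end

theorem stmt_14_general
 {G : Type*} [Group G]
    (e : G) (hcomm : commutator G = Subgroup.zpowers e) (he : orderOf e = 2)
    (a b : G)
    :
    (∀ y₁ y₂ y₃ : R2 G, InIdC e y₁ → InIdC e y₂ → InIdC e y₃ →
      (∀ x : R2 G,
        (1 + y₁ * emb a + y₂ * emb b + y₃ * (emb a * emb b)) * x =
          x * (1 + y₁ * emb a + y₂ * emb b + y₃ * (emb a * emb b))) ∧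
      (1 + y₁ * emb a + y₂ * emb b + y₃ * (emb a * emb b)) *
        (1 + y₁ * emb a + y₂ * emb b + y₃ * (emb a * emb b)) = 1 ∧
      aug (1 + y₁ * emb a + y₂ * emb b + y₃ * (emb a * emb b)) = 1 ∧
      odot e (1 + y₁ * emb a + y₂ * emb b + y₃ * (emb a * emb b)) *
        (1 + y₁ * emb a + y₂ * emb b + y₃ * (emb a * emb b)) = 1) ∧
    ∃ W : Subgroup (R2 G)ˣ,
      (W : Set (R2 G)ˣ) = WsetB e a b ∧
      (∀ w ∈ W, w ∈ VodotSet G e ∧ w * w = 1 ∧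
        ∀ x : R2 G, (w : R2 G) * x = x * (w : R2 G)) := by
  have hec := mem_center_of_commutator_eq_zpowers hcomm he
  have he2 : e * e = 1 := by rw [← pow_two, ← he, pow_orderOf_eq_one]
  have hsq {w : (R2 G)ˣ} (hw : w ∈ WsetB e a b) : w * w = 1 :=
    Units.ext (isCentralUnitaryInvolution_of_mem_WsetB hcomm he hw).2.1
  let W : Subgroup (R2 G)ˣ :=
    { carrier := WsetB e a b
      one_mem' := one_mem_WsetB
      mul_mem' := mul_mem_WsetB hec he2
      inv_mem' := fun hw => by rwa [inv_eq_of_mul_eq_one_right (hsq hw)] }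
  refine ⟨fun _ _ _ => isCentralUnitaryInvolution_of_inIdC hcomm he, W, rfl, fun w hw => ?_⟩
  obtain ⟨hcentral, -, haug, hodot⟩ := isCentralUnitaryInvolution_of_mem_WsetB hcomm he hw
  exact ⟨⟨haug, Units.eq_inv_of_mul_eq_one_right hodot⟩, hsq hw, hcentral⟩

/-- Every element `y = 1 + y₁a + y₂b + y₃ab` with `y₁, y₂, y₃ ∈ (1 + e)ℤ₂C` is a central
unit of `ℤ₂G` with `y² = 1`; consequently `W = {1 + y₁a + y₂b + y₃ab : yᵢ ∈ (1 + e)ℤ₂C}` is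
a central elementary abelian 2-subgroup of `V_⊙(ℤ₂G)`. -/
theorem stmt_14
 {G : Type*} [Group G] [Fintype G] (hG : IsPGroup 2 G)
    (e : G) (hcomm : commutator G = Subgroup.zpowers e) (he : orderOf e = 2)
    (a b : G)
    (ha : orderOf ((a : G ⧸ Subgroup.center G)) = 2)
    (hb : orderOf ((b : G ⧸ Subgroup.center G)) = 2)
    (hab : ((a : G ⧸ Subgroup.center G)) * b = (b : G ⧸ Subgroup.center G) * a)
    (hinf : Subgroup.zpowers ((a : G ⧸ Subgroup.center G)) ⊓
      Subgroup.zpowers ((b : G ⧸ Subgroup.center G)) = ⊥)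
    (hsup : Subgroup.zpowers ((a : G ⧸ Subgroup.center G)) ⊔
      Subgroup.zpowers ((b : G ⧸ Subgroup.center G)) = ⊤)
    :
    (∀ y₁ y₂ y₃ : R2 G, InIdC e y₁ → InIdC e y₂ → InIdC e y₃ →
      (∀ x : R2 G,
        (1 + y₁ * emb a + y₂ * emb b + y₃ * (emb a * emb b)) * x =
          x * (1 + y₁ * emb a + y₂ * emb b + y₃ * (emb a * emb b))) ∧
      (1 + y₁ * emb a + y₂ * emb b + y₃ * (emb a * emb b)) *
        (1 + y₁ * emb a + y₂ * emb b + y₃ * (emb a * emb b)) = 1 ∧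
      aug (1 + y₁ * emb a + y₂ * emb b + y₃ * (emb a * emb b)) = 1 ∧
      odot e (1 + y₁ * emb a + y₂ * emb b + y₃ * (emb a * emb b)) *
        (1 + y₁ * emb a + y₂ * emb b + y₃ * (emb a * emb b)) = 1) ∧
    ∃ W : Subgroup (R2 G)ˣ,
      (W : Set (R2 G)ˣ) = WsetB e a b ∧
      (∀ w ∈ W, w ∈ VodotSet G e ∧ w * w = 1 ∧
        ∀ x : R2 G, (w : R2 G) * x = x * (w : R2 G)) :=
  stmt_14_general e hcomm he a b
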